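/- arXiv:2203.03255 — 4 statements merged into one kernel-verified Lean document; each statement's English description precedes it below -/
import Mathlib

section
/- Let R be a ring, M a left R-module, and r_j·x = m_j (j ∈ J, r_j ∈ R, m_j ∈ M) a finitely solvable system of equations in one unknown x. Then there exists a left R-module B, an injective R-homomorphism α : M → B whose image α(M) is a pure submodule of B, and an element b ∈ B such that r_j·b = α(m_j) for all j ∈ J and B = α(M) + R·b (so B/α(M) is cyclic). -/
/-- A submodule `A` of `B` is *pure* if every finite system of linear equations
`∑ i, r j i • x i = a j` with constants in `A` that is solvable in `B` is solvable in `A`. -/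
def IsPureSubmodule {R : Type*} [Ring R] {B : Type*} [AddCommGroup B] [Module R B]
    (A : Submodule R B) : Prop :=
  ∀ (m n : ℕ) (r : Fin m → Fin n → R) (a : Fin m → A),
    (∃ x : Fin n → B, ∀ j, ∑ i, r j i • x i = (a j : B)) →
    ∃ x : Fin n → A, ∀ j, ∑ i, r j i • ((x i : B)) = (a j : B)

universe u v w

/-!
`B` is `R × M` modulo the relations `(-r j, m j)`: a pair `(t, y)` stands for `t • x + y`
with `x` the unknown, so `B` is `M` with a solution `x` of the system freely adjoined.
A relation is an `R`-combination of finitely many generators, so it vanishes at `x = z` as soon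
as `z` solves the corresponding finite subsystem. Hence any finite system over `M` that becomes
solvable in `B` only used finitely many relations, and substituting a solution `z` of those
solves it already in `M`: this gives both purity and injectivity.
-/

namespace SinglePureExtension

variable {R : Type u} [Ring R] {M : Type v} [AddCommGroup M] [Module R M] {J : Type w}
  (r : J → R) (m : J → M)

def evalAt (z : M) : R × M →ₗ[R] M :=
  (LinearMap.toSpanSingleton R M z).coprod LinearMap.id

@[simp]
theorem evalAt_apply (z : M) (p : R × M) : evalAt z p = p.1 • z + p.2 := rfl

def relations : Submodule R (R × M) :=
  Submodule.span R (Set.range fun j => (-r j, m j))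

abbrev Carrier : Type (max u v) := (R × M) ⧸ relations r m

def embedding : M →ₗ[R] Carrier r m :=
  (relations r m).mkQ ∘ₗ LinearMap.inr R R M

def solution : Carrier r m :=
  (relations r m).mkQ (1, 0)

variable {r m}

theorem exists_finset_evalAt_eq_zero {p : R × M} (hp : p ∈ relations r m) :
    ∃ s : Finset J, ∀ z : M, (∀ j ∈ s, r j • z = m j) → evalAt z p = 0 := by
  classical
  induction hp using Submodule.span_induction with
  | mem p hp =>
    obtain ⟨j, rfl⟩ := hp
    exact ⟨{j}, fun z hz => by simp [hz j (Finset.mem_singleton_self j)]⟩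
  | zero => exact ⟨∅, fun z _ => map_zero _⟩
  | add p q _ _ hp hq =>
    obtain ⟨s, hs⟩ := hp
    obtain ⟨t, ht⟩ := hq
    refine ⟨s ∪ t, fun z hz => ?_⟩
    rw [map_add, hs z fun j hj => hz j (Finset.mem_union_left t hj),
      ht z fun j hj => hz j (Finset.mem_union_right s hj), add_zero]
  | smul c p _ hp =>
    obtain ⟨s, hs⟩ := hp
    exact ⟨s, fun z hz => by rw [map_smul, hs z hz, smul_zero]⟩

theorem exists_evalAt_eq_zero (hfs : ∀ s : Finset J, ∃ z : M, ∀ j ∈ s, r j • z = m j)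
    {ι : Type*} [Fintype ι] {p : ι → R × M} (hp : ∀ i, p i ∈ relations r m) :
    ∃ z : M, ∀ i, evalAt z (p i) = 0 := by
  classical
  choose s hs using fun i => exists_finset_evalAt_eq_zero (hp i)
  obtain ⟨z, hz⟩ := hfs (Finset.univ.biUnion s)
  exact ⟨z, fun i => hs i z fun j hj => hz j (Finset.mem_biUnion.2 ⟨i, Finset.mem_univ i, hj⟩)⟩

theorem embedding_injective (hfs : ∀ s : Finset J, ∃ z : M, ∀ j ∈ s, r j • z = m j) :
    Function.Injective (embedding r m) := by
  intro x y hxy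
  have hmem : ((0 : R), x - y) ∈ relations r m := by
    simpa using (Submodule.Quotient.eq _).1 hxy
  obtain ⟨z, hz⟩ := exists_evalAt_eq_zero hfs (p := fun _ : Unit => ((0 : R), x - y))
    fun _ => hmem
  simpa [sub_eq_zero] using hz ()

theorem isPureSubmodule_range_embedding
    (hfs : ∀ s : Finset J, ∃ z : M, ∀ j ∈ s, r j • z = m j) :
    IsPureSubmodule (LinearMap.range (embedding r m)) := by
  rintro k n c a ⟨x, hx⟩
  choose p hp using fun i => (relations r m).mkQ_surjective (x i)
  choose y hy using fun j => LinearMap.mem_range.1 (a j).2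
  have hrel : ∀ j, ∑ i, c j i • p i - ((0 : R), y j) ∈ relations r m := fun j => by
    refine (Submodule.Quotient.eq _).1 ?_
    calc (relations r m).mkQ (∑ i, c j i • p i) = ∑ i, c j i • x i := by simp [hp]
      _ = embedding r m (y j) := by rw [hx j, hy j]
  obtain ⟨z, hz⟩ := exists_evalAt_eq_zero hfs hrel
  refine ⟨fun i => ⟨embedding r m (evalAt z (p i)), LinearMap.mem_range_self _ _⟩, fun j => ?_⟩
  have hsolve : evalAt z (∑ i, c j i • p i) = y j := by
    have := hz j
    rwa [map_sub, sub_eq_zero, evalAt_apply _ (0, y j), zero_smul, zero_add] at this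
  calc ∑ i, c j i • embedding r m (evalAt z (p i))
      = embedding r m (evalAt z (∑ i, c j i • p i)) := by simp only [map_sum, map_smul]
    _ = a j := by rw [hsolve, hy]

theorem smul_solution (j : J) : r j • solution r m = embedding r m (m j) := by
  have hgen : ((-r j, m j) : R × M) ∈ relations r m := Submodule.subset_span ⟨j, rfl⟩
  rw [solution, embedding, ← map_smul]
  refine (Submodule.Quotient.eq _).2 ?_
  simpa using (relations r m).neg_mem hgen

theorem exists_eq_embedding_add_smul_solution (x : Carrier r m) :
    ∃ (y : M) (s : R), x = embedding r m y + s • solution r m := by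
  obtain ⟨⟨s, y⟩, rfl⟩ := (relations r m).mkQ_surjective x
  refine ⟨y, s, ?_⟩
  rw [solution, embedding, ← map_smul, LinearMap.comp_apply, ← map_add]
  simp

end SinglePureExtension

open SinglePureExtension in
/-- Given a finitely solvable system of equations `r j • x = m j` (`j ∈ J`) in one unknown
over a left `R`-module `M`, there is a single pure extension `B` of `M` (i.e. `M` embeds in
`B` as a pure submodule with cyclic quotient) in which the system has a solution. -/
theorem exists_single_pure_extension_with_solution (R : Type u) [Ring R]
    (M : Type v) [AddCommGroup M] [Module R M] (J : Type w) (r : J → R) (m : J → M)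
    (hfs : ∀ s : Finset J, ∃ z : M, ∀ j ∈ s, r j • z = m j) :
    ∃ (B : Type (max u v)) (_ : AddCommGroup B) (_ : Module R B)
      (α : M →ₗ[R] B) (b : B),
      Function.Injective α ∧ IsPureSubmodule (LinearMap.range α) ∧
      (∀ j : J, r j • b = α (m j)) ∧
      (∀ x : B, ∃ (y : M) (s : R), x = α y + s • b) :=
  ⟨Carrier r m, inferInstance, inferInstance, embedding r m, solution r m,
    embedding_injective hfs, isPureSubmodule_range_embedding hfs, smul_solution,
    exists_eq_embedding_add_smul_solution⟩
end

section
/- Let R be a ring and M a left R-module. The following conditions are equivalent: (1) the countable direct sum M^(ℕ) is semi-compact; (2) the set of left ideals of R of the form ^⊥X = {r ∈ R | r·x = 0 for all x ∈ X}, X a subset of M, satisfies the ascending chain condition; (3) M satisfies the descending chain condition on the subgroups M[I] where I ranges over the finitely generated left ideals of R; (4) M is Σ-semi-compact, i.e. every direct sum of copies of M (indexed by an arbitrary set) is semi-compact. -/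
/-- A left `R`-module `M` is *semi-compact* if every finitely solvable family of congruences
`x ≡ x α (mod M[I α])` (`x α ∈ M`, `I α` a left ideal of `R`), i.e. a family such that every
finite subfamily has a common solution, has a simultaneous solution in `M`.
Here `y ≡ x α (mod M[I α])` is expressed as `∀ r ∈ I α, r • y = r • x α`. -/
def IsSemiCompact (R : Type*) [Ring R] (M : Type*) [AddCommGroup M] [Module R M] : Prop :=
  ∀ (Λ : Type*) (x : Λ → M) (I : Λ → Ideal R),
    (∀ s : Finset Λ, ∃ y : M, ∀ α ∈ s, ∀ r ∈ I α, r • y = r • x α) →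
    ∃ y : M, ∀ (α : Λ), ∀ r ∈ I α, r • y = r • x α

/-- `M` is *Σ-semi-compact* if every direct sum of copies of `M` (here realized as
`ι →₀ M` for an arbitrary index type `ι`) is semi-compact. -/
def IsSigmaSemiCompact.{s, u, v, w} (R : Type u) [Ring R] (M : Type v)
    [AddCommGroup M] [Module R M] : Prop :=
  ∀ ι : Type w, IsSemiCompact.{u, max v w, s} R (ι →₀ M)

/-!
All four conditions are equivalent to the descending chain condition on the subgroups `M[I]`,
`I` an arbitrary left ideal. Since `I ↦ M[I]` and `X ↦ ^⊥X` form an antitone Galois connection,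
this is the ascending chain condition on the ideals `^⊥X`; and it reduces to finitely generated
`I`, because a minimal `M[J]` with `J ≤ I` finitely generated cannot shrink when an element of `I`
is added to `J`, so it equals `M[I]`.

A direct sum `M^(ι)` inherits the chain condition coordinatewise, and a module with it is
semi-compact: a minimal `M[I_{α₁} + ⋯ + I_{αₙ}]` lies in every `M[I_α]`, so a solution of those
`n` congruences solves all of them. Conversely, from `M[I_0] ⊋ M[I_1] ⊋ ⋯` and
`x_n ∈ M[I_n] ∖ M[I_{n+1}]`, the congruences `y ≡ x_0 e_0 + ⋯ + x_{n-1} e_{n-1} (mod M^(ℕ)[I_n])`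
are finitely solvable, but a solution has some zero coordinate `n`, which forces
`x_n ∈ M[I_{n+1}]`.
-/

open Set

theorem Set.isWF_iff_antitone_chain_condition {α : Type*} [PartialOrder α] {s : Set α} :
    s.IsWF ↔ ∀ g : ℕ → α, (∀ n, g n ∈ s) → Antitone g → ∃ n, ∀ k, n ≤ k → g k = g n := by
  refine ⟨fun h g hg hanti => ?_, fun h => isWF_iff_no_descending_seq.2 fun f hf hfs => ?_⟩
  · obtain ⟨_, hmin⟩ := (h.subset (range_subset_iff.2 hg)).exists_minimal (range_nonempty g)
    obtain ⟨n, rfl⟩ := hmin.prop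
    exact ⟨n, fun k hk => hmin.eq_of_le (mem_range_self k) (hanti hk)⟩
  · obtain ⟨n, hn⟩ := h f hfs hf.antitone
    exact (hf n.lt_succ_self).ne (hn (n + 1) n.le_succ)

section Annihilators

variable (R : Type*) [Ring R] (M : Type*) [AddCommGroup M] [Module R M]

/-- `M[I]`: only an additive subgroup, since `R` need not be commutative. -/
def annihilatedBy (I : Ideal R) : AddSubgroup M where
  carrier := {y | ∀ r ∈ I, r • y = 0}
  add_mem' ha hb r hr := by rw [smul_add, ha r hr, hb r hr, add_zero]
  zero_mem' r _ := smul_zero r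
  neg_mem' ha r hr := by rw [smul_neg, ha r hr, neg_zero]

variable {M} in
/-- `^⊥X`. -/
def setAnnihilator (X : Set M) : Ideal R where
  carrier := {r | ∀ x ∈ X, r • x = 0}
  add_mem' ha hb x hx := by rw [add_smul, ha x hx, hb x hx, add_zero]
  zero_mem' x _ := zero_smul R x
  smul_mem' c r hr x hx := by rw [smul_eq_mul, mul_smul, hr x hx, smul_zero]

variable {R M}

@[simp]
theorem coe_annihilatedBy (I : Ideal R) :
    (annihilatedBy R M I : Set M) = {y | ∀ r ∈ I, r • y = 0} := rfl

@[simp]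
theorem coe_setAnnihilator (X : Set M) :
    (setAnnihilator R X : Set R) = {r | ∀ x ∈ X, r • x = 0} := rfl

theorem gc_annihilatedBy_setAnnihilator :
    GaloisConnection (fun I => OrderDual.toDual (annihilatedBy R M I : Set M))
      (fun X => setAnnihilator R (OrderDual.ofDual X)) :=
  fun _ _ => ⟨fun h _ hr _ hx => h hx _ hr, fun h _ hx _ hr => h hr _ hx⟩

theorem annihilatedBy_anti : Antitone (annihilatedBy R M) :=
  fun _ _ h _ hy r hr => hy r (h hr)

theorem setAnnihilator_anti : Antitone (setAnnihilator R (M := M)) :=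
  fun _ _ h _ hr x hx => hr x (h hx)

theorem annihilatedBy_setAnnihilator_annihilatedBy (I : Ideal R) :
    annihilatedBy R M (setAnnihilator R (annihilatedBy R M I : Set M)) = annihilatedBy R M I :=
  SetLike.coe_injective (gc_annihilatedBy_setAnnihilator.l_u_l_eq_l I)

theorem setAnnihilator_annihilatedBy_setAnnihilator (X : Set M) :
    setAnnihilator R (annihilatedBy R M (setAnnihilator R X) : Set M) = setAnnihilator R X :=
  gc_annihilatedBy_setAnnihilator.u_l_u_eq_u (OrderDual.toDual X)

theorem mem_annihilatedBy_iff_le {I : Ideal R} {y : M} :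
    y ∈ annihilatedBy R M I ↔ I ≤ setAnnihilator R {y} :=
  ⟨fun h r hr _ hx => hx ▸ h r hr, fun h _ hr => h hr y rfl⟩

theorem mem_annihilatedBy_finset_sup {Λ : Type*} {S : Finset Λ} {I : Λ → Ideal R} {y : M} :
    y ∈ annihilatedBy R M (S.sup I) ↔ ∀ α ∈ S, y ∈ annihilatedBy R M (I α) := by
  simp only [mem_annihilatedBy_iff_le, Finset.sup_le_iff]

theorem sub_mem_annihilatedBy_iff {I : Ideal R} {y x : M} :
    y - x ∈ annihilatedBy R M I ↔ ∀ r ∈ I, r • y = r • x := by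
  simp only [← SetLike.mem_coe, coe_annihilatedBy, Set.mem_ofPred_eq, smul_sub, sub_eq_zero]

end Annihilators

section SemiCompact

variable {R : Type*} [Ring R] {M : Type*} [AddCommGroup M] [Module R M]

theorem isSemiCompact_of_isWF (h : (range (annihilatedBy R M)).IsWF) : IsSemiCompact R M := by
  classical
  intro Λ x I hfin
  simp only [← sub_mem_annihilatedBy_iff] at hfin ⊢
  have hsub : (range fun S : Finset Λ => annihilatedBy R M (S.sup I)) ⊆ range (annihilatedBy R M) :=
    range_subset_iff.2 fun S => mem_range_self (S.sup I)
  obtain ⟨_, hmin⟩ := (h.subset hsub).exists_minimal (range_nonempty _)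
  obtain ⟨S, rfl⟩ := hmin.prop
  have hS : ∀ α, annihilatedBy R M (S.sup I) ≤ annihilatedBy R M (I α) := fun α => by
    have hle := annihilatedBy_anti (M := M) (Finset.sup_mono (Finset.subset_insert α S) (f := I))
    exact (hmin.eq_of_le (mem_range_self (insert α S)) hle).ge.trans
      (annihilatedBy_anti (Finset.le_sup (Finset.mem_insert_self α S)))
  obtain ⟨y, hy⟩ := hfin S
  refine ⟨y, fun α => ?_⟩
  obtain ⟨z, hz⟩ := hfin (insert α S)
  have hyz : y - z ∈ annihilatedBy R M (S.sup I) := mem_annihilatedBy_finset_sup.2 fun β hβ => by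
    simpa using sub_mem (hy β hβ) (hz β (Finset.mem_insert_of_mem hβ))
  simpa using add_mem (hS α hyz) (hz α (Finset.mem_insert_self α S))

section Finsupp

variable {ι : Type*} {I : Ideal R}

theorem mem_annihilatedBy_finsupp {z : ι →₀ M} :
    z ∈ annihilatedBy R (ι →₀ M) I ↔ ∀ i, z i ∈ annihilatedBy R M I :=
  ⟨fun h i r hr => by simpa using DFunLike.congr_fun (h r hr) i,
    fun h r hr => by ext i; simpa using h i r hr⟩

theorem single_mem_annihilatedBy {i : ι} {a : M} :
    Finsupp.single i a ∈ annihilatedBy R (ι →₀ M) I ↔ a ∈ annihilatedBy R M I := by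
  show (∀ r ∈ I, r • Finsupp.single i a = 0) ↔ ∀ r ∈ I, r • a = 0
  simp only [Finsupp.smul_single, Finsupp.single_eq_zero]

theorem isWF_range_annihilatedBy_finsupp (h : (range (annihilatedBy R M)).IsWF) :
    (range (annihilatedBy R (ι →₀ M))).IsWF := by
  rw [IsWF, wellFoundedOn_range] at h ⊢
  refine Subrelation.wf (fun {I J} hIJ => ?_) h
  obtain ⟨hle, z, hzJ, hzI⟩ := SetLike.lt_iff_le_and_exists.1 hIJ
  obtain ⟨i, hi⟩ : ∃ i, z i ∉ annihilatedBy R M I := by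
    simpa [mem_annihilatedBy_finsupp] using hzI
  refine SetLike.lt_iff_le_and_exists.2 ⟨fun a ha => ?_, z i, mem_annihilatedBy_finsupp.1 hzJ i, hi⟩
  exact single_mem_annihilatedBy.1 (hle ((single_mem_annihilatedBy (i := i)).2 ha))

theorem IsSemiCompact.exists_mem_annihilatedBy_succ (h : IsSemiCompact R (ι →₀ M)) (e : ℕ ↪ ι)
    (I : ℕ → Ideal R) (x : ℕ → M) (hx : ∀ n m, n ≤ m → x m ∈ annihilatedBy R M (I n)) :
    ∃ n, x n ∈ annihilatedBy R M (I (n + 1)) := by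
  classical
  set w : ℕ → ι →₀ M := fun n => ∑ m ∈ Finset.range n, Finsupp.single (e m) (x m) with hw
  have hcong : ∀ n N, n ≤ N → w N - w n ∈ annihilatedBy R (ι →₀ M) (I n) := by
    intro n N hnN
    rw [hw, ← Finset.sum_Ico_eq_sub _ hnN]
    exact sum_mem fun m hm => single_mem_annihilatedBy.2 (hx n m (Finset.mem_Ico.1 hm).1)
  obtain ⟨y, hy⟩ := h (ULift ℕ) (fun n => w n.down) (fun n => I n.down) fun S =>
    ⟨w (S.sup ULift.down), fun n hn => sub_mem_annihilatedBy_iff.1 (hcong _ _ (Finset.le_sup hn))⟩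
  obtain ⟨n, hn⟩ := Infinite.exists_notMem_finset (y.support.preimage e e.injective.injOn)
  have hyn : y (e n) = 0 := by simpa using hn
  have hwn : w (n + 1) (e n) = x n := by simp [hw, Finsupp.finsetSum_apply, Finsupp.single_apply]
  refine ⟨n, ?_⟩
  simpa [hyn, hwn] using
    mem_annihilatedBy_finsupp.1 (sub_mem_annihilatedBy_iff.2 (hy ⟨n + 1⟩)) (e n)

theorem IsSemiCompact.isWF_range_annihilatedBy [Infinite ι] (h : IsSemiCompact R (ι →₀ M)) :
    (range (annihilatedBy R M)).IsWF := by
  refine isWF_iff_no_descending_seq.2 fun f hf hfr => ?_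
  choose I hI using hfr
  choose x hx hx' using fun n : ℕ => SetLike.exists_of_lt (hf n.lt_succ_self)
  obtain ⟨n, hn⟩ := h.exists_mem_annihilatedBy_succ (Infinite.natEmbedding ι) I x
    fun n m hnm => hI n ▸ hf.antitone hnm (hx m)
  exact hx' n (hI (n + 1) ▸ hn)

theorem isSemiCompact_finsupp_iff_isWF [Infinite ι] :
    IsSemiCompact R (ι →₀ M) ↔ (range (annihilatedBy R M)).IsWF :=
  ⟨IsSemiCompact.isWF_range_annihilatedBy,
    fun h => isSemiCompact_of_isWF (isWF_range_annihilatedBy_finsupp h)⟩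

end Finsupp

end SemiCompact

section ChainConditions

variable {R : Type*} [Ring R] {M : Type*} [AddCommGroup M] [Module R M]

theorem acc_setAnnihilator_iff_isWF :
    (∀ f : ℕ → Ideal R, (∀ n, ∃ X : Set M, f n = setAnnihilator R X) → Monotone f →
      ∃ n, ∀ k, n ≤ k → f k = f n) ↔ (range (annihilatedBy R M)).IsWF := by
  rw [isWF_iff_antitone_chain_condition]
  refine ⟨fun h g hg hanti => ?_, fun h f hf hmono => ?_⟩
  · have hclosed : ∀ k, annihilatedBy R M (setAnnihilator R (g k : Set M)) = g k := fun k => by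
      obtain ⟨I, hI⟩ := hg k
      rw [← hI, annihilatedBy_setAnnihilator_annihilatedBy]
    obtain ⟨n, hn⟩ := h (fun k => setAnnihilator R (g k : Set M)) (fun k => ⟨_, rfl⟩)
      fun a b hab => setAnnihilator_anti (hanti hab)
    refine ⟨n, fun k hk => ?_⟩
    rw [← hclosed k, ← hclosed n, hn k hk]
  · have hclosed : ∀ k, setAnnihilator R (annihilatedBy R M (f k) : Set M) = f k := fun k => by
      obtain ⟨X, hX⟩ := hf k
      rw [hX, setAnnihilator_annihilatedBy_setAnnihilator]
    obtain ⟨n, hn⟩ := h (fun k => annihilatedBy R M (f k)) (fun k => mem_range_self _)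
      fun a b hab => annihilatedBy_anti (hmono hab)
    refine ⟨n, fun k hk => ?_⟩
    rw [← hclosed k, ← hclosed n, hn k hk]

theorem exists_fg_annihilatedBy_eq
    (h : {A : AddSubgroup M | ∃ I : Ideal R, I.FG ∧ A = annihilatedBy R M I}.IsWF)
    (I : Ideal R) : ∃ J : Ideal R, J.FG ∧ annihilatedBy R M I = annihilatedBy R M J := by
  have hsub : annihilatedBy R M '' {J | J.FG ∧ J ≤ I} ⊆
      {A | ∃ I : Ideal R, I.FG ∧ A = annihilatedBy R M I} := by
    rintro _ ⟨J, ⟨hJ, -⟩, rfl⟩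
    exact ⟨J, hJ, rfl⟩
  obtain ⟨_, hmin⟩ := (h.subset hsub).exists_minimal ⟨_, ⊥, ⟨Submodule.fg_bot, bot_le⟩, rfl⟩
  obtain ⟨J, ⟨hJ, hJI⟩, rfl⟩ := hmin.prop
  refine ⟨J, hJ, le_antisymm (annihilatedBy_anti hJI) fun y hy s hs => ?_⟩
  have hJs : J ⊔ Ideal.span {s} ∈ {J | J.FG ∧ J ≤ I} :=
    ⟨Submodule.FG.sup hJ (Submodule.fg_span_singleton s),
      sup_le hJI ((Ideal.span_singleton_le_iff_mem I).2 hs)⟩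
  have heq := hmin.eq_of_le (mem_image_of_mem _ hJs) (annihilatedBy_anti le_sup_left)
  exact (heq ▸ hy : y ∈ annihilatedBy R M (J ⊔ Ideal.span {s})) s
    (Ideal.mem_sup_right (Ideal.mem_span_singleton_self s))

theorem isWF_fg_annihilatedBy_iff :
    {A : AddSubgroup M | ∃ I : Ideal R, I.FG ∧ A = annihilatedBy R M I}.IsWF ↔
      (range (annihilatedBy R M)).IsWF := by
  refine ⟨fun h => h.subset ?_, fun h => h.subset ?_⟩
  · rintro _ ⟨I, rfl⟩
    exact exists_fg_annihilatedBy_eq h I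
  · rintro _ ⟨I, -, rfl⟩
    exact mem_range_self I

end ChainConditions

/-- For a left `R`-module `M`, the following are equivalent: (1) the countable direct sum
`M^(ℕ)` is semi-compact; (2) the left ideals of the form `^⊥X = {r | r • x = 0 ∀ x ∈ X}`
(`X ⊆ M`) satisfy the ascending chain condition; (3) `M` satisfies the descending chain
condition on the subgroups `M[I]` with `I` a finitely generated left ideal; (4) `M` is
Σ-semi-compact. -/
theorem sigmaSemiCompact_tfae (R : Type*) [Ring R] (M : Type*)
    [AddCommGroup M] [Module R M] :
    List.TFAE [
      IsSemiCompact R (ℕ →₀ M),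
      ∀ f : ℕ → Ideal R,
        (∀ n, ∃ X : Set M, (f n : Set R) = {r : R | ∀ x ∈ X, r • x = 0}) →
        Monotone f → ∃ n, ∀ k, n ≤ k → f k = f n,
      ∀ g : ℕ → AddSubgroup M,
        (∀ n, ∃ I : Ideal R, I.FG ∧ (g n : Set M) = {y : M | ∀ r ∈ I, r • y = 0}) →
        Antitone g → ∃ n, ∀ k, n ≤ k → g k = g n,
      IsSigmaSemiCompact R M] := by
  refine List.tfae_of_forall (range (annihilatedBy R M)).IsWF _ ?_
  simp only [List.mem_cons, List.not_mem_nil, or_false, forall_eq_or_imp, forall_eq,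
    ← coe_setAnnihilator, ← coe_annihilatedBy, SetLike.coe_set_eq]
  refine ⟨isSemiCompact_finsupp_iff_isWF, acc_setAnnihilator_iff_isWF,
    isWF_iff_antitone_chain_condition.symm.trans isWF_fg_annihilatedBy_iff, ?_⟩
  exact ⟨fun h => isSemiCompact_finsupp_iff_isWF.1 (h (ULift ℕ)),
    fun h _ => isSemiCompact_of_isWF (isWF_range_annihilatedBy_finsupp h)⟩
end

section
/- Let R be a ring. The following conditions are equivalent: (1) R satisfies the ascending chain condition on left annulets, i.e. on left ideals of the form ^⊥X = {r ∈ R | r·x = 0 for all x ∈ X} with X a subset of R; (2) R satisfies the descending chain condition on right annulets, i.e. on right ideals of the form X^⊥ = {r ∈ R | x·r = 0 for all x ∈ X} with X a subset of R; (3) R is Σ-semi-compact as a left R-module. -/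
/-!
Left and right annulets are the extents and intents of the concept lattice of the relation
`a * b = 0`, so both chain conditions say that this complete lattice is well-founded for `>`,
i.e. that all of its elements are compact. Compactness yields, for any family of left ideals
`I α`, finitely many of them whose right annihilators already have the full intersection. A
solution in `ι →₀ R` of those finitely many congruences then solves every other one, since its
difference from a solution of one more congruence lies coordinatewise in that intersection.

Conversely, a strictly ascending chain of left annulets `L n` provides `a n ∈ L (n + 1)` and
`b n` in the right annihilator of `L n` with `a n * b n ≠ 0`, while `a m * b k = 0` for `m < k`.
The congruences `x ≡ ∑_{j ≤ m} b j • e j` modulo the annihilator of `R a m` in `ℕ →₀ R` are then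
finitely solvable, but a solution would have to be nonzero at every coordinate.
-/

namespace Concept

variable {α β : Type*} {r : α → β → Prop}

theorem wellFoundedGT_iff_extent_chain :
    WellFoundedGT (Concept α β r) ↔ ∀ f : ℕ → Set α, (∀ n, ∃ t, f n = lowerPolar r t) →
      Monotone f → ∃ n, ∀ k, n ≤ k → f k = f n := by
  rw [wellFoundedGT_iff_monotone_chain_condition]
  constructor
  · intro h f hf hmono
    choose t ht using hf
    have hc : ∀ n, (ofAttributes r (t n)).extent = f n := fun n => (ht n).symm
    obtain ⟨n, hn⟩ := h ⟨fun n => ofAttributes r (t n), fun a b hab => by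
      rw [← extent_subset_extent_iff, hc, hc]; exact hmono hab⟩
    exact ⟨n, fun k hk => by rw [← hc, ← hc]; exact congrArg extent (hn k hk).symm⟩
  · intro h c
    obtain ⟨n, hn⟩ := h (fun n => (c n).extent) (fun n => ⟨_, (c n).lowerPolar_intent.symm⟩)
      (fun a b hab => extent_subset_extent_iff.2 (c.mono hab))
    exact ⟨n, fun k hk => ext (hn k hk).symm⟩

theorem wellFoundedGT_iff_intent_chain :
    WellFoundedGT (Concept α β r) ↔ ∀ f : ℕ → Set β, (∀ n, ∃ s, f n = upperPolar r s) →
      Antitone f → ∃ n, ∀ k, n ≤ k → f k = f n := by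
  rw [wellFoundedGT_iff_monotone_chain_condition]
  constructor
  · intro h f hf hanti
    choose s hs using hf
    have hc : ∀ n, (ofObjects r (s n)).intent = f n := fun n => (hs n).symm
    obtain ⟨n, hn⟩ := h ⟨fun n => ofObjects r (s n), fun a b hab => by
      rw [← intent_subset_intent_iff, hc, hc]; exact hanti hab⟩
    exact ⟨n, fun k hk => by rw [← hc, ← hc]; exact congrArg intent (hn k hk).symm⟩
  · intro h c
    obtain ⟨n, hn⟩ := h (fun n => (c n).intent) (fun n => ⟨_, (c n).upperPolar_extent.symm⟩)
      (fun a b hab => intent_subset_intent_iff.2 (c.mono hab))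
    exact ⟨n, fun k hk => ext' (hn k hk).symm⟩

theorem exists_finset_biInter_upperPolar_subset [WellFoundedGT (Concept α β r)] {ι : Type*}
    (s : ι → Set α) : ∃ S : Finset ι, ⋂ i ∈ S, upperPolar r (s i) ⊆ ⋂ i, upperPolar r (s i) := by
  have hcompact : IsCompactElement (⨆ i, ofObjects r (s i)) :=
    (CompleteLattice.isSupFiniteCompact_iff_all_elements_compact _).1
      (CompleteLattice.WellFoundedGT.isSupFiniteCompact _) _
  obtain ⟨S, hS⟩ := CompleteLattice.IsCompactElement.exists_finset_of_le_iSup _ hcompact _ le_rfl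
  refine ⟨S, ?_⟩
  simpa using intent_subset_intent_iff.2 hS

theorem exists_mem_extent_mem_intent_not_rel_of_lt {c d : Concept α β r} (h : c < d) :
    ∃ a ∈ d.extent, ∃ b ∈ c.intent, ¬ r a b := by
  obtain ⟨a, had, hac⟩ := Set.exists_of_ssubset (extent_ssubset_extent_iff.2 h)
  rw [← c.lowerPolar_intent, mem_lowerPolar_iff] at hac
  push Not at hac
  obtain ⟨b, hb, hab⟩ := hac
  exact ⟨a, had, b, hb, hab⟩

end Concept

section Ring

universe u v w s

variable {R : Type u} [Ring R]

theorem isSemiCompact_of_exists_finset {M : Type v} [AddCommGroup M] [Module R M]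
    (h : ∀ (Λ : Type s) (I : Λ → Ideal R), ∃ S : Finset Λ, ∀ m : M,
      (∀ α ∈ S, ∀ r ∈ I α, r • m = 0) → ∀ α, ∀ r ∈ I α, r • m = 0) :
    IsSemiCompact.{u, v, s} R M := by
  classical
  intro Λ x I hfin
  obtain ⟨S, hS⟩ := h Λ I
  obtain ⟨y, hy⟩ := hfin S
  refine ⟨y, fun β r hr => ?_⟩
  obtain ⟨z, hz⟩ := hfin (insert β S)
  have hyz : ∀ α ∈ S, ∀ r ∈ I α, r • (y - z) = 0 := fun α hα r hr => by
    rw [smul_sub, hy α hα r hr, hz α (Finset.mem_insert_of_mem hα) r hr, sub_self]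
  rw [← hz β (Finset.mem_insert_self β S) r hr, ← sub_eq_zero, ← smul_sub]
  exact hS _ hyz β r hr

theorem isSemiCompact_finsupp [WellFoundedGT (Concept R R (· * · = 0))] (ι : Type w) :
    IsSemiCompact.{u, max u w, s} R (ι →₀ R) := by
  refine isSemiCompact_of_exists_finset fun Λ I => ?_
  obtain ⟨S, hS⟩ := Concept.exists_finset_biInter_upperPolar_subset (r := (· * · = (0 : R)))
    fun α => (I α : Set R)
  refine ⟨S, fun m hm β r hr => Finsupp.ext fun j => ?_⟩
  have hj : m j ∈ ⋂ α ∈ S, upperPolar (· * · = (0 : R)) (I α : Set R) := by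
    simp only [Set.mem_iInter]
    intro α hα t ht
    simpa using DFunLike.congr_fun (hm α hα t ht) j
  simpa using Set.mem_iInter.1 (hS hj) β hr

theorem isSigmaSemiCompact_self [WellFoundedGT (Concept R R (· * · = 0))] :
    IsSigmaSemiCompact.{s, u, u, w} R R :=
  isSemiCompact_finsupp

theorem smul_eq_smul_of_mem_span_singleton {M : Type v} [AddCommGroup M] [Module R M]
    {a t : R} {x y : M} (ht : t ∈ Ideal.span {a}) (h : a • x = a • y) : t • x = t • y := by
  obtain ⟨c, rfl⟩ := Ideal.mem_span_singleton'.1 ht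
  rw [mul_smul, mul_smul, h]

variable (R) in
noncomputable def truncatedSeq (b : ℕ → R) (m : ℕ) : ULift.{w} ℕ →₀ R :=
  ∑ j ∈ Finset.range (m + 1), Finsupp.single (ULift.up j) (b j)

theorem truncatedSeq_apply (b : ℕ → R) (m k : ℕ) :
    truncatedSeq.{u, w} R b m ⟨k⟩ = if k ≤ m then b k else 0 := by
  simp [truncatedSeq, Finsupp.finsetSum_apply, Finsupp.single_apply]

theorem smul_truncatedSeq_eq_of_le {a : R} {b : ℕ → R} {m n : ℕ} (hmn : m ≤ n)
    (ha : ∀ k, m < k → a * b k = 0) :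
    a • truncatedSeq.{u, w} R b n = a • truncatedSeq R b m := by
  ext ⟨k⟩
  simp only [Finsupp.smul_apply, smul_eq_mul, truncatedSeq_apply]
  split_ifs with hkn hkm hkm
  · rfl
  · rw [mul_zero]
    exact ha k (not_le.1 hkm)
  · exact absurd (hkm.trans hmn) hkn
  · rfl

theorem not_isSemiCompact_of_mul_eq_zero {a b : ℕ → R} (hzero : ∀ m k, m < k → a m * b k = 0)
    (hne : ∀ n, a n * b n ≠ 0) : ¬ IsSemiCompact.{u, max u w, s} R (ULift.{w} ℕ →₀ R) := by
  intro h
  obtain ⟨y, hy⟩ := h (ULift.{s} ℕ) (fun m => truncatedSeq R b m.down)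
    (fun m => Ideal.span {a m.down}) fun S =>
      ⟨truncatedSeq R b (S.sup ULift.down), fun m hm t ht =>
        smul_eq_smul_of_mem_span_singleton ht <|
          smul_truncatedSeq_eq_of_le (Finset.le_sup hm) (hzero m.down)⟩
  obtain ⟨⟨n⟩, hn⟩ := Infinite.exists_notMem_finset y.support
  have hcoord := DFunLike.congr_fun (hy ⟨n⟩ (a n) (Ideal.mem_span_singleton_self _)) ⟨n⟩
  simp only [Finsupp.smul_apply, smul_eq_mul, Finsupp.notMem_support_iff.1 hn, mul_zero,
    truncatedSeq_apply, le_refl, if_true] at hcoord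
  exact hne n hcoord.symm

theorem wellFoundedGT_concept_of_isSemiCompact
    (h : IsSemiCompact.{u, max u w, s} R (ULift.{w} ℕ →₀ R)) :
    WellFoundedGT (Concept R R (· * · = 0)) := by
  refine ⟨wellFounded_iff_isEmpty_descending_chain.2 ⟨fun ⟨c, hc⟩ => ?_⟩⟩
  choose a ha b hb hab using fun n => Concept.exists_mem_extent_mem_intent_not_rel_of_lt (hc n)
  refine not_isSemiCompact_of_mul_eq_zero (fun m k hmk => ?_) hab h
  have hle : c (m + 1) ≤ c k := (strictMono_nat_of_lt_succ hc).monotone hmk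
  exact Concept.rel_extent_intent (c := c k) (Concept.extent_subset_extent_iff.2 hle (ha m)) (hb k)

end Ring

/-- For a ring `R`, the following are equivalent: (1) `R` satisfies the ascending chain
condition on left annulets `^⊥X = {r | r * x = 0 ∀ x ∈ X}` (`X ⊆ R`); (2) `R` satisfies
the descending chain condition on right annulets `X^⊥ = {r | x * r = 0 ∀ x ∈ X}`;
(3) `R` is Σ-semi-compact as a left `R`-module. -/
theorem sigmaSemiCompact_ring_tfae (R : Type*) [Ring R] :
    List.TFAE [
      ∀ f : ℕ → Set R,
        (∀ n, ∃ X : Set R, f n = {r : R | ∀ x ∈ X, r * x = 0}) →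
        Monotone f → ∃ n, ∀ k, n ≤ k → f k = f n,
      ∀ f : ℕ → Set R,
        (∀ n, ∃ X : Set R, f n = {r : R | ∀ x ∈ X, x * r = 0}) →
        Antitone f → ∃ n, ∀ k, n ≤ k → f k = f n,
      IsSigmaSemiCompact R R] := by
  have hacc := Concept.wellFoundedGT_iff_extent_chain (r := (· * · = (0 : R)))
  have hdcc := Concept.wellFoundedGT_iff_intent_chain (r := (· * · = (0 : R)))
  tfae_have 1 ↔ 2 := hacc.symm.trans hdcc
  tfae_have 1 → 3 := fun h => haveI := hacc.2 h; isSigmaSemiCompact_self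
  tfae_have 3 → 1 := fun h => hacc.1 (wellFoundedGT_concept_of_isSemiCompact (h (ULift ℕ)))
  tfae_finish
end

section
/- Let R be a ring which is a subring of a left Noetherian ring S (i.e. there is an injective ring homomorphism R → S with S left Noetherian). Then every flat left R-module is semi-compact. -/
/-- Flatness of a left module over an arbitrary (possibly noncommutative) ring: the tensor
functor with `M` preserves injections. This is expressed by the standard equational
criterion (equivalent to Mathlib's `Module.Flat` in the commutative case): every finite
system of relations `∑ i, r j i • x i = 0` in `M` comes from relations in `R`. -/
def IsFlatModule (R : Type*) [Ring R] (M : Type*) [AddCommGroup M] [Module R M] : Prop :=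
  ∀ (m n : ℕ) (r : Fin m → Fin n → R) (x : Fin n → M),
    (∀ j, ∑ i, r j i • x i = 0) →
    ∃ (k : ℕ) (a : Fin n → Fin k → R) (y : Fin k → M),
      (∀ i, x i = ∑ l, a i l • y l) ∧ ∀ j l, ∑ i, r j i * a i l = 0

open Function

theorem Submodule.exists_finset_subset_image_subset_span {R M ι : Type*} [Semiring R]
    [AddCommMonoid M] [Module R M] [IsNoetherian R M] (φ : ι → M) (U : Set ι) :
    ∃ t : Finset ι, ↑t ⊆ U ∧ φ '' U ⊆ span R (φ '' t) := by
  classical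
  obtain ⟨s, hsU, hspan⟩ :=
    (fg_span_iff_fg_span_finset_subset (φ '' U)).1 (IsNoetherian.noetherian (R := R) _)
  obtain ⟨t, htU, rfl⟩ := Finset.subset_set_image_iff.1 hsU
  refine ⟨t, htU, ?_⟩
  rw [← Finset.coe_image, ← hspan]
  exact subset_span

theorem Ideal.mul_eq_zero_of_mem_span {S : Type*} [Ring S] {X : Set S} {u b : S}
    (hu : u ∈ Ideal.span X) (hb : ∀ x ∈ X, x * b = 0) : u * b = 0 :=
  (Ideal.span_le (I := LinearMap.ker (LinearMap.toSpanSingleton S S b))).2 hb hu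

theorem IsFlatModule.smul_eq_zero_of_forall_mul_eq_zero {R M : Type*} [Ring R]
    [AddCommGroup M] [Module R M] (hM : IsFlatModule R M) {ι : Type*} [Finite ι] (g : ι → R)
    {m : M} (hm : ∀ i, g i • m = 0) {s : R} (hs : ∀ a, (∀ i, g i * a = 0) → s * a = 0) :
    s • m = 0 := by
  obtain ⟨n, ⟨e⟩⟩ := Finite.exists_equiv_fin ι
  obtain ⟨k, a, y, hmy, hrel⟩ :=
    hM n 1 (fun j _ => g (e.symm j)) (fun _ => m) (by simpa using fun j => hm _)
  have hsa : ∀ l, s * a 0 l = 0 := fun l => hs _ fun i => by simpa using hrel (e i) l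
  simp [hmy 0, Finset.smul_sum, smul_smul, hsa]

theorem IsFlatModule.exists_finset_forall_smul_eq_zero {R S M : Type*} [Ring R] [Ring S]
    [IsNoetherianRing S] {f : R →+* S} (hf : Injective f) [AddCommGroup M] [Module R M]
    (hM : IsFlatModule R M) {Λ : Type*} (I : Λ → Ideal R) :
    ∃ F : Finset Λ, ∀ m : M, (∀ γ ∈ F, ∀ r ∈ I γ, r • m = 0) → ∀ β, ∀ s ∈ I β, s • m = 0 := by
  classical
  obtain ⟨t, htI, hspan⟩ := Submodule.exists_finset_subset_image_subset_span (R := S)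
    (fun p : Λ × R => f p.2) {p | p.2 ∈ I p.1}
  refine ⟨t.image Prod.fst, fun m hm β s hs => ?_⟩
  refine hM.smul_eq_zero_of_forall_mul_eq_zero (fun p : t => p.1.2)
    (fun p => hm _ (Finset.mem_image_of_mem _ p.2) _ (htI p.2)) fun a ha => hf ?_
  rw [map_mul, map_zero]
  refine Ideal.mul_eq_zero_of_mem_span (hspan ⟨(β, s), hs, rfl⟩) ?_
  rintro _ ⟨p, hp, rfl⟩
  rw [← map_mul, ha ⟨p, hp⟩, map_zero]

theorem isSemiCompact_of_forall_exists_finset.{u} {R M : Type*} [Ring R] [AddCommGroup M]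
    [Module R M] (h : ∀ (Λ : Type u) (I : Λ → Ideal R), ∃ F : Finset Λ, ∀ m : M,
      (∀ γ ∈ F, ∀ r ∈ I γ, r • m = 0) → ∀ β, ∀ s ∈ I β, s • m = 0) :
    IsSemiCompact.{_, _, u} R M := by
  classical
  intro Λ x I hsol
  obtain ⟨F, hF⟩ := h Λ I
  obtain ⟨y, hy⟩ := hsol F
  refine ⟨y, fun α s hs => ?_⟩
  obtain ⟨z, hz⟩ := hsol (insert α F)
  have hyz : ∀ γ ∈ F, ∀ r ∈ I γ, r • (y - z) = 0 := fun γ hγ r hr => by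
    rw [smul_sub, hy γ hγ r hr, hz γ (Finset.mem_insert_of_mem hγ) r hr, sub_self]
  rw [← hz α (Finset.mem_insert_self α F) s hs, ← sub_eq_zero, ← smul_sub]
  exact hF _ hyz α s hs

/-- If `R` is a subring of a left Noetherian ring `S` (i.e. there is an injective ring
homomorphism `R → S` with `S` left Noetherian), then every flat left `R`-module is
semi-compact. -/
theorem flat_isSemiCompact_of_subring_noetherian (R S : Type*) [Ring R] [Ring S]
    (f : R →+* S) (hf : Function.Injective f) (hS : IsNoetherianRing S)
    (M : Type*) [AddCommGroup M] [Module R M] (hM : IsFlatModule R M) :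
    IsSemiCompact R M :=
  isSemiCompact_of_forall_exists_finset fun _ => hM.exists_finset_forall_smul_eq_zero hf
end
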